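/- arXiv:math/0702690 — 2 statements merged into one kernel-verified Lean document; each statement's English description precedes it below -/
import Mathlib

section
/- For a stochastic matrix P on E = {1,...,N}, letting L index all N^N functions β_ℓ : E → E and setting p_ℓ = P_{1,β_ℓ(1)} · P_{2,β_ℓ(2)} ⋯ P_{N,β_ℓ(N)}, the weights p_ℓ are nonnegative, sum to 1, and P = ∑_{ℓ∈L} p_ℓ D_ℓ, where D_ℓ is the deterministic matrix (D_ℓ)_{ij} = δ_{β_ℓ(i),j}. -/
/-! Choosing, independently for each row `i`, a column `β i` with probability `P i (β i)` gives a
random map `β` with law `p β = ∏ i, P i (β i)`; the entry `(i, j)` of `∑ β, p β • D β` is the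
probability that `β i = j`, which is `P i j` because the other rows sum to one. -/

open Finset

section ProductWeights

variable {ι α R : Type*} [Fintype ι] [DecidableEq ι] [Fintype α] [CommSemiring R]

theorem sum_prod_apply_eq_one {P : ι → α → R} (hrow : ∀ i, ∑ a, P i a = 1) :
    ∑ β : ι → α, ∏ i, P i (β i) = 1 := by
  rw [← Fintype.prod_sum, Fintype.prod_eq_one _ hrow]

theorem sum_prod_apply_mul_ite_eq [DecidableEq α] {P : ι → α → R}
    (hrow : ∀ i, ∑ a, P i a = 1) (i : ι) (j : α) :
    ∑ β : ι → α, (∏ k, P k (β k)) * (if β i = j then 1 else 0) = P i j := by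
  -- the indicator of `β i = j` is absorbed as a factor of row `i` of the product
  let Q : ι → α → R := fun k a => P k a * if k = i then (if a = j then 1 else 0) else 1
  have hQ : ∀ β : ι → α, (∏ k, P k (β k)) * (if β i = j then 1 else 0) = ∏ k, Q k (β k) := by
    intro β
    simp only [Q, prod_mul_distrib, prod_ite_eq', mem_univ, if_true]
  have hrowQ : ∀ k, ∑ a, Q k a = if k = i then P i j else 1 := by
    intro k
    by_cases hk : k = i
    · subst hk
      simp [Q]
    · simp [Q, hk, hrow k]
  simp only [hQ]
  rw [← Fintype.prod_sum, Fintype.prod_congr _ _ hrowQ, prod_ite_eq' univ i (fun _ => P i j)]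
  simp

end ProductWeights

theorem Matrix.eq_sum_prod_smul_of_sum_row_eq_one {m n R : Type*} [Fintype m] [DecidableEq m]
    [Fintype n] [DecidableEq n] [CommSemiring R] {P : Matrix m n R}
    (hrow : ∀ i, ∑ j, P i j = 1) :
    P = ∑ β : m → n, (∏ i, P i (β i)) • Matrix.of fun i j => if β i = j then (1 : R) else 0 := by
  ext i j
  simp only [Matrix.sum_apply, Matrix.smul_apply, Matrix.of_apply, smul_eq_mul,
    sum_prod_apply_mul_ite_eq hrow]

theorem davis_decomposition_with_product_weights_general
    {N : ℕ} (P : Matrix (Fin N) (Fin N) ℝ)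
    (hpos : ∀ i j, 0 ≤ P i j) (hrow : ∀ i, ∑ j, P i j = 1) :
    (∀ β : Fin N → Fin N, 0 ≤ ∏ i, P i (β i)) ∧
    (∑ β : Fin N → Fin N, ∏ i, P i (β i)) = 1 ∧
    P = ∑ β : Fin N → Fin N,
      (∏ i, P i (β i)) • (Matrix.of fun i j => if β i = j then (1 : ℝ) else 0) :=
  ⟨fun β => prod_nonneg fun i _ => hpos i (β i), sum_prod_apply_eq_one hrow,
    Matrix.eq_sum_prod_smul_of_sum_row_eq_one hrow⟩

/-- For a stochastic matrix `P` on `E = {1,...,N}` (`N ≥ 1`), the Davis weights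
`p β = ∏ i, P i (β i)` over all `N^N` maps `β : E → E` are nonnegative, sum to one, and
`P = ∑ β, p β • D β` where `D β` is the deterministic matrix of `β`. -/
theorem davis_decomposition_with_product_weights
    {N : ℕ} (hN : 1 ≤ N) (P : Matrix (Fin N) (Fin N) ℝ)
    (hpos : ∀ i j, 0 ≤ P i j) (hrow : ∀ i, ∑ j, P i j = 1) :
    (∀ β : Fin N → Fin N, 0 ≤ ∏ i, P i (β i)) ∧
    (∑ β : Fin N → Fin N, ∏ i, P i (β i)) = 1 ∧
    P = ∑ β : Fin N → Fin N,
      (∏ i, P i (β i)) • (Matrix.of fun i j => if β i = j then (1 : ℝ) else 0) :=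
  davis_decomposition_with_product_weights_general P hpos hrow
end

section
/- Let P be a permutation matrix on E associated to a bijection β, and let u be a unitary on ℓ²(E). Then the *-automorphism T a = u* a u satisfies T m_f = m_{Pf} for all f : E → ℂ if and only if for every j ∈ E, u|j⟩ = c_j · P*|j⟩ for some phase factor c_j with |c_j| = 1, i.e. u|j⟩ is a unimodular multiple of the column P*|j⟩. -/
open Matrix

/-- let `P` be the permutation matrix of a bijection `β` of the finite set `E`
and `u` a unitary on `ℓ²(E)`. The `*`-automorphism `T a = u* a u` satisfies `T m_f = m_{Pf}`
for all `f : E → ℂ` if and only if for every `j ∈ E`, `u|j⟩` is a unimodular multiple of the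
column `P*|j⟩`. -/
theorem automorphism_extends_permutation_iff
    {E : Type} [Fintype E] [DecidableEq E] (β : E ≃ E) (u : Matrix E E ℂ)
    (hu : u ∈ Matrix.unitaryGroup E ℂ) :
    (∀ f : E → ℂ,
        uᴴ * Matrix.diagonal f * u = Matrix.diagonal fun i => f (β i)) ↔
      (∀ j : E, ∃ c : ℂ, ‖c‖ = 1 ∧
        u.mulVec (Pi.single j 1)
          = c • ((Matrix.of fun i k => if β i = k then (1 : ℂ) else 0)ᴴ).mulVec
              (Pi.single j 1)) := by
  have hsu : star u * u = 1 := hu.1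
  have hus : u * star u = 1 := hu.2
  rw [Matrix.star_eq_conjTranspose] at hsu hus
  constructor
  · intro h j
    -- entrywise commutation
    have key : ∀ (f : E → ℂ) i k, f i * u i k = u i k * f (β k) := by
      intro f i k
      have h1 : Matrix.diagonal f * u = u * Matrix.diagonal (fun i => f (β i)) := by
        calc Matrix.diagonal f * u = u * (uᴴ * Matrix.diagonal f * u) := by
              rw [← Matrix.mul_assoc, ← Matrix.mul_assoc, hus, Matrix.one_mul]
          _ = u * Matrix.diagonal (fun i => f (β i)) := by rw [h f]
      have := congrFun (congrFun h1 i) k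
      simpa [Matrix.diagonal_mul, Matrix.mul_diagonal] using this
    have hzero : ∀ i, i ≠ β j → u i j = 0 := by
      intro i hi
      have := key (Pi.single i 1) i j
      rw [Pi.single_eq_same, Pi.single_eq_of_ne (fun hh => hi hh.symm), one_mul, mul_zero] at this
      exact this
    set c : ℂ := u (β j) j with hc
    have hnorm : (starRingEnd ℂ) c * c = 1 := by
      have := congrFun (congrFun hsu j) j
      rw [Matrix.mul_apply] at this
      have hsum : ∑ a, uᴴ j a * u a j = (starRingEnd ℂ) c * c := by
        rw [Finset.sum_eq_single (β j)]
        · simp [Matrix.conjTranspose_apply, hc]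
        · intro b _ hb
          simp [hzero b hb]
        · simp
      rw [hsum] at this
      simpa using this
    refine ⟨c, ?_, ?_⟩
    · have h2 : (Complex.normSq c : ℂ) = 1 := by
        rw [← Complex.mul_conj, mul_comm]
        exact hnorm
      have h3 : Complex.normSq c = 1 := by exact_mod_cast h2
      rw [← Complex.sq_norm] at h3
      have : ‖c‖ = 1 := by nlinarith [norm_nonneg c]
      simpa using this
    · funext i
      simp only [Matrix.mulVec, dotProduct, Pi.single_apply, Pi.smul_apply,
        smul_eq_mul, Matrix.conjTranspose_apply, Matrix.of_apply]
      rw [Finset.sum_eq_single j, Finset.sum_eq_single j]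
      · by_cases hij : i = β j
        · subst hij; simp [hc]
        · have hne : ¬ β j = i := fun hh => hij hh.symm
          simp [hzero i hij, hne]
      · intro b _ hb; simp [hb]
      · simp
      · intro b _ hb; simp [hb]
      · simp
  · intro h f
    choose c hcnorm hcvec using h
    have hcol : ∀ i j, u i j = c j * (if β j = i then 1 else 0) := by
      intro i j
      have := congrFun (hcvec j) i
      simp only [Matrix.mulVec, dotProduct, Pi.single_apply, Pi.smul_apply,
        smul_eq_mul, Matrix.conjTranspose_apply, Matrix.of_apply] at this
      rw [Finset.sum_eq_single j, Finset.sum_eq_single j] at this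
      · simpa using this
      · intro b _ hb; simp [hb]
      · simp
      · intro b _ hb; simp [hb]
      · simp
    have hcc : ∀ j, (starRingEnd ℂ) (c j) * c j = 1 := by
      intro j
      have h2 : Complex.normSq (c j) = 1 := by
        rw [← Complex.sq_norm]
        rw [show ‖c j‖ = 1 from by simpa using hcnorm j]
        ring
      rw [mul_comm, Complex.mul_conj, h2, Complex.ofReal_one]
    funext i k
    rw [Matrix.mul_apply]
    simp only [Matrix.mul_diagonal, Matrix.conjTranspose_apply, Matrix.diagonal_apply]
    rw [Finset.sum_eq_single (β i)]
    · rw [hcol (β i) i, hcol (β i) k]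
      by_cases hik : i = k
      · subst hik
        simp only [if_pos rfl, if_true, mul_one]
        rw [mul_right_comm, show star (c i) = (starRingEnd ℂ) (c i) from rfl, hcc i, one_mul]
      · have h2 : ¬ β k = β i := fun hh => hik (β.injective hh).symm
        rw [if_neg h2, mul_zero, mul_zero, if_neg hik]
    · intro b _ hb
      have hne : ¬ β i = b := fun hh => hb hh.symm
      rw [hcol b i, if_neg hne, mul_zero, star_zero, zero_mul, zero_mul]
    · simp
end
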